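/- Let $\nu\in(0,1)$, $c>0$, $\lambda_-\le -1$, and define ${\mathcal C}(x) = -\frac{c\Gamma(-\nu)\sin(\pi\nu)}{\pi}\int_{-\infty}^{\lambda_-}\frac{e^{-xz}(-z+\lambda_-)^{\nu}}{z(z+1)}\,dz$ for $x\le 0$. Then ${\mathcal C}$ is strictly increasing and continuous on $(-\infty,0]$, satisfies $\lim_{x\to-\infty}{\mathcal C}(x)=0$, and ${\mathcal C}(0)<\infty$. Consequently, for every $r$ with $0<r<{\mathcal C}(0)$ there exists a unique $\bar h<0$ with ${\mathcal C}(\bar h)=r$. -/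

import Mathlib

/-!
Write the integrand as `exp (-x * z) * g z` with `g z = (-z + λ₋) ^ ν / (z * (z + 1))`.
The weight `g` is positive on `(-∞, λ₋)` and integrable there: it is `O(|z + 1| ^ (ν - 1))`
near `-1` and `O(|z| ^ (ν - 2))` at `-∞`. For `x ≤ 0` and `z < 0` we have `exp (-x * z) ≤ 1`,
so `‖g‖` dominates every integrand; continuity and the limit `0` at `-∞` then follow from
dominated convergence, and strict monotonicity from that of `x ↦ exp (-x * z)` for `z < 0`.
The prefactor is positive because `Γ(-ν) < 0` for `ν ∈ (0, 1)`, and `h̄` is produced by the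
intermediate value theorem.
-/

open MeasureTheory Real Set Filter Topology

theorem Real.Gamma_neg_of_neg_one_lt_of_neg {s : ℝ} (h1 : -1 < s) (h0 : s < 0) :
    Gamma s < 0 := by
  have hpos : 0 < Gamma (s + 1) := Gamma_pos_of_pos (by linarith)
  rw [Gamma_add_one h0.ne] at hpos
  nlinarith

theorem Real.Gamma_neg_mul_sin_pi_mul_neg {ν : ℝ} (hν : ν ∈ Ioo 0 1) :
    Gamma (-ν) * sin (π * ν) < 0 :=
  mul_neg_of_neg_of_pos
    (Gamma_neg_of_neg_one_lt_of_neg (by linarith [hν.2]) (by linarith [hν.1]))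
    (sin_pos_of_pos_of_lt_pi (mul_pos pi_pos hν.1) (mul_lt_of_lt_one_right pi_pos hν.2))

lemma norm_exp_neg_mul_mul_le {x z : ℝ} (hx : x ≤ 0) (hz : z ≤ 0) (y : ℝ) :
    ‖exp (-x * z) * y‖ ≤ ‖y‖ := by
  rw [norm_mul, norm_of_nonneg (exp_pos _).le]
  exact mul_le_of_le_one_left (norm_nonneg y) (exp_le_one_iff.mpr (by nlinarith))

lemma setIntegral_pos_of_forall_mem_pos {X : Type*} [MeasurableSpace X] {μ : Measure X}
    {f : X → ℝ} {s : Set X} (hs : MeasurableSet s) (hμs : μ s ≠ 0) (hf : IntegrableOn f s μ)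
    (hpos : ∀ x ∈ s, 0 < f x) : 0 < ∫ x in s, f x ∂μ := by
  rw [setIntegral_pos_iff_support_of_nonneg_ae
      (ae_restrict_of_forall_mem hs fun x hx => (hpos x hx).le) hf,
    inter_eq_right.mpr fun x hx => Function.mem_support.mpr (hpos x hx).ne']
  exact pos_iff_ne_zero.mpr hμs

section LaplaceIio

variable {g : ℝ → ℝ} {a : ℝ}

lemma ae_norm_exp_neg_mul_mul_le (ha : a ≤ 0) {x : ℝ} (hx : x ≤ 0) :
    ∀ᵐ z ∂volume.restrict (Iio a), ‖exp (-x * z) * g z‖ ≤ ‖g z‖ :=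
  ae_restrict_of_forall_mem measurableSet_Iio fun z (hz : z < a) =>
    norm_exp_neg_mul_mul_le hx (by linarith) (g z)

lemma aestronglyMeasurable_exp_neg_mul_mul (hg : IntegrableOn g (Iio a)) (x : ℝ) :
    AEStronglyMeasurable (fun z => exp (-x * z) * g z) (volume.restrict (Iio a)) :=
  (Continuous.aestronglyMeasurable (by fun_prop)).mul hg.aestronglyMeasurable

lemma integrableOn_exp_neg_mul_mul (hg : IntegrableOn g (Iio a)) (ha : a ≤ 0) {x : ℝ}
    (hx : x ≤ 0) : IntegrableOn (fun z => exp (-x * z) * g z) (Iio a) :=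
  hg.norm.mono' (aestronglyMeasurable_exp_neg_mul_mul hg x) (ae_norm_exp_neg_mul_mul_le ha hx)

lemma continuousOn_integral_exp_neg_mul_mul (hg : IntegrableOn g (Iio a)) (ha : a ≤ 0) :
    ContinuousOn (fun x => ∫ z in Iio a, exp (-x * z) * g z) (Iic 0) :=
  continuousOn_of_dominated (fun x _ => aestronglyMeasurable_exp_neg_mul_mul hg x)
    (fun _ hx => ae_norm_exp_neg_mul_mul_le ha hx) hg.norm
    (ae_of_all _ fun _ => Continuous.continuousOn (by fun_prop))

lemma tendsto_integral_exp_neg_mul_mul_atBot (hg : IntegrableOn g (Iio a)) (ha : a ≤ 0) :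
    Tendsto (fun x => ∫ z in Iio a, exp (-x * z) * g z) atBot (𝓝 0) := by
  have hlim : ∀ z < 0, Tendsto (fun x => exp (-x * z) * g z) atBot (𝓝 0) := fun z hz => by
    have : Tendsto (fun x => -x * z) atBot atBot :=
      (tendsto_id.atBot_mul_const (neg_pos.mpr hz)).congr fun x => by simp
    simpa using (tendsto_exp_atBot.comp this).mul_const (g z)
  simpa using tendsto_integral_filter_of_dominated_convergence _
    (Eventually.of_forall (aestronglyMeasurable_exp_neg_mul_mul hg))
    ((eventually_le_atBot 0).mono fun _ hx => ae_norm_exp_neg_mul_mul_le ha hx) hg.norm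
    (ae_restrict_of_forall_mem measurableSet_Iio fun z (hz : z < a) => hlim z (by linarith))

lemma strictMonoOn_integral_exp_neg_mul_mul (hg : IntegrableOn g (Iio a)) (ha : a ≤ 0)
    (hpos : ∀ z < a, 0 < g z) :
    StrictMonoOn (fun x => ∫ z in Iio a, exp (-x * z) * g z) (Iic 0) := by
  intro x hx y hy hxy
  rw [← sub_pos]
  beta_reduce
  rw [← integral_sub (integrableOn_exp_neg_mul_mul hg ha hy)
    (integrableOn_exp_neg_mul_mul hg ha hx)]
  refine setIntegral_pos_of_forall_mem_pos measurableSet_Iio (by simp)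
    ((integrableOn_exp_neg_mul_mul hg ha hy).sub (integrableOn_exp_neg_mul_mul hg ha hx))
    fun z (hz : z < a) => sub_pos.mpr ?_
  exact mul_lt_mul_of_pos_right (exp_lt_exp.mpr (by nlinarith)) (hpos z hz)

end LaplaceIio

lemma integrableOn_rpow_div_mul_add_one {ν lm : ℝ} (hν : ν ∈ Ioo 0 1) (hlm : lm ≤ -1) :
    IntegrableOn (fun z => (-z + lm) ^ ν / (z * (z + 1))) (Iio lm) := by
  -- `t = -1 - z` turns the majorant `(-1 - z) ^ (ν - 1) / (-z)` into `t ^ (ν - 1) / (t + 1)`.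
  have hdom : IntegrableOn (fun z => rpowIntegrand₀₁ ν (-1 - z) 1) (Iio (-1)) := by
    have := (volume.measurePreserving_sub_left (-1 : ℝ)).integrableOn_comp_preimage
      (Homeomorph.subLeft (-1 : ℝ)).measurableEmbedding
      (f := (rpowIntegrand₀₁ ν · 1)) (s := Ioi 0)
    simpa [Function.comp_def] using this.mpr (integrableOn_rpowIntegrand₀₁_Ioi hν zero_le_one)
  refine (hdom.mono_set (Iio_subset_Iio hlm)).mono'
    (Measurable.aestronglyMeasurable (by fun_prop)) ?_
  refine ae_restrict_of_forall_mem measurableSet_Iio fun z (hz : z < lm) => ?_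
  have ht : 0 < -1 - z := by linarith
  have hnorm : ‖(-z + lm) ^ ν / (z * (z + 1))‖ = (-z + lm) ^ ν / (-1 - z) / -z := by
    rw [Real.norm_of_nonneg (div_nonneg (rpow_nonneg (by linarith) _) (by nlinarith)),
      div_div, mul_comm]
    ring_nf
  rw [hnorm, rpowIntegrand₀₁_eq_pow_div hν ht.le zero_le_one, rpow_sub_one ht.ne', mul_one,
    show -1 - z + 1 = -z by ring]
  gcongr <;> linarith [hν.1]

lemma rpow_div_mul_add_one_pos {ν lm z : ℝ} (hlm : lm ≤ -1) (hz : z < lm) :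
    0 < (-z + lm) ^ ν / (z * (z + 1)) :=
  div_pos (rpow_pos_of_pos (by linarith) ν) (by nlinarith)

lemma existsUnique_lt_eq_of_strictMonoOn_Iic {f : ℝ → ℝ} {b l r : ℝ}
    (hmono : StrictMonoOn f (Iic b)) (hcont : ContinuousOn f (Iic b))
    (hlim : Tendsto f atBot (𝓝 l)) (hlr : l < r) (hrb : r < f b) :
    ∃! h, h < b ∧ f h = r := by
  obtain ⟨x, hxr, hxb⟩ :=
    ((hlim.eventually (eventually_lt_nhds hlr)).and (eventually_le_atBot b)).exists
  obtain ⟨h, hh, rfl⟩ :=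
    intermediate_value_Icc hxb (hcont.mono Icc_subset_Iic_self) ⟨hxr.le, hrb.le⟩
  have hhb : h < b := hh.2.lt_of_ne (by rintro rfl; exact hrb.false)
  exact ⟨h, ⟨hhb, rfl⟩, fun h' ⟨hh'b, heq⟩ => hmono.injOn hh'b.le hhb.le heq⟩

theorem stmt6 (ν c lm : ℝ) (hν : ν ∈ Set.Ioo (0:ℝ) 1) (hc : 0 < c) (hlm : lm ≤ -1)
    (C : ℝ → ℝ)
    (hC : ∀ x, C x = -(c * Real.Gamma (-ν) * Real.sin (π * ν) / π) *
        ∫ z in Set.Iio lm, Real.exp (-x * z) * (-z + lm) ^ ν / (z * (z + 1))) :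
    StrictMonoOn C (Set.Iic 0) ∧
    ContinuousOn C (Set.Iic 0) ∧
    Tendsto C atBot (nhds 0) ∧
    IntegrableOn (fun z => (-z + lm) ^ ν / (z * (z + 1))) (Set.Iio lm) ∧
    ∀ r : ℝ, 0 < r → r < C 0 → ∃! h : ℝ, h < 0 ∧ C h = r := by
  set K := -(c * Gamma (-ν) * sin (π * ν) / π)
  have hK : 0 < K := neg_pos.mpr <| div_neg_of_neg_of_pos
    (by rw [mul_assoc]; exact mul_neg_of_pos_of_neg hc (Gamma_neg_mul_sin_pi_mul_neg hν)) pi_pos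
  have hg := integrableOn_rpow_div_mul_add_one hν hlm
  have ha : lm ≤ 0 := by linarith
  have hCK : C = fun x => K * ∫ z in Iio lm, exp (-x * z) * ((-z + lm) ^ ν / (z * (z + 1))) :=
    funext fun x => by simp_rw [hC, mul_div_assoc]
  have hmono : StrictMonoOn C (Iic 0) := hCK ▸ fun x hx y hy hxy =>
    mul_lt_mul_of_pos_left (strictMonoOn_integral_exp_neg_mul_mul hg ha
      (fun _ hz => rpow_div_mul_add_one_pos hlm hz) hx hy hxy) hK
  have hcont : ContinuousOn C (Iic 0) :=
    hCK ▸ continuousOn_const.mul (continuousOn_integral_exp_neg_mul_mul hg ha)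
  have hlim : Tendsto C atBot (𝓝 0) := by
    simpa [hCK] using (tendsto_integral_exp_neg_mul_mul_atBot hg ha).const_mul K
  exact ⟨hmono, hcont, hlim, hg, fun r hr hrC =>
    existsUnique_lt_eq_of_strictMonoOn_Iic hmono hcont hlim hr hrC⟩
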